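/- Let Z : [0,2π] → ℝ be continuous, let K > 0 and ω > 0, and consider the set D = {J > 0 : ω + K·Z(θ)·J > 0 for all θ ∈ [0,2π]}. Then the function G : D → ℝ defined by G(J) = ∫₀^{2π} J/(ω + K·Z(θ)·J) dθ is strictly increasing on (each connected component of) D containing 0 in its closure; consequently, the normalization equation G(J) = 1, which characterizes the stationary flux of the continuum of impulsively coupled oscillators, has at most one solution J* in that component. -/

import Mathlib

open Real Set intervalIntegral

/-- The set `D` of admissible constant fluxes: `J > 0` such that the velocity
`ω + K Z(θ) J` is positive for all `θ ∈ [0,2π]`. (This set is an interval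
having `0` in its closure, i.e. the connected component of admissible fluxes
adjacent to `0`.) -/
def fluxDomain (Z : ℝ → ℝ) (K ω : ℝ) : Set ℝ :=
  {J : ℝ | 0 < J ∧ ∀ θ ∈ Icc (0 : ℝ) (2 * π), 0 < ω + K * Z θ * J}

/-- The normalization integral `G(J) = ∫₀^{2π} J/(ω + K Z(θ) J) dθ` of the
stationary density `ρ*(θ) = J/(ω + K Z(θ) J)`. -/
noncomputable def normIntegral (Z : ℝ → ℝ) (K ω J : ℝ) : ℝ :=
  ∫ θ in (0 : ℝ)..(2 * π), J / (ω + K * Z θ * J)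

/-! For a fixed phase `θ`, the stationary density `J / (ω + c J)` with `c = K Z(θ)` is strictly
increasing in the flux wherever the velocity is positive, because cross-multiplying reduces
`J₁ / (ω + c J₁) < J₂ / (ω + c J₂)` to `ω J₁ < ω J₂`. Integrating a strict pointwise inequality
between continuous functions gives a strict inequality, so `G` is strictly increasing on the
admissible domain and hence injective there. -/

lemma strictMonoOn_div_add_mul {ω : ℝ} (hω : 0 < ω) (c : ℝ) :
    StrictMonoOn (fun J => J / (ω + c * J)) {J | 0 < ω + c * J} := by
  intro J₁ h₁ J₂ h₂ h12
  rw [div_lt_div_iff₀ h₁ h₂]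
  nlinarith

lemma continuousOn_stationaryDensity {Z : ℝ → ℝ} {s : Set ℝ} (hZ : ContinuousOn Z s)
    (K ω J : ℝ) (hv : ∀ θ ∈ s, 0 < ω + K * Z θ * J) :
    ContinuousOn (fun θ => J / (ω + K * Z θ * J)) s :=
  continuousOn_const.div (by fun_prop) fun θ hθ => (hv θ hθ).ne'

lemma strictMonoOn_normIntegral {Z : ℝ → ℝ} (hZ : ContinuousOn Z (Icc 0 (2 * π)))
    (K : ℝ) {ω : ℝ} (hω : 0 < ω) :
    StrictMonoOn (normIntegral Z K ω) (fluxDomain Z K ω) := by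
  intro J₁ ⟨_, hv₁⟩ J₂ ⟨_, hv₂⟩ h12
  have hpos : (0 : ℝ) < 2 * π := by positivity
  have hlt : ∀ θ ∈ Icc (0 : ℝ) (2 * π), J₁ / (ω + K * Z θ * J₁) < J₂ / (ω + K * Z θ * J₂) :=
    fun θ hθ => strictMonoOn_div_add_mul hω (K * Z θ) (hv₁ θ hθ) (hv₂ θ hθ) h12
  exact integral_lt_integral_of_continuousOn_of_le_of_exists_lt hpos
    (continuousOn_stationaryDensity hZ K ω J₁ hv₁) (continuousOn_stationaryDensity hZ K ω J₂ hv₂)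
    (fun θ hθ => (hlt θ (Ioc_subset_Icc_self hθ)).le)
    ⟨0, left_mem_Icc.2 hpos.le, hlt 0 (left_mem_Icc.2 hpos.le)⟩

theorem stationary_flux_unique_general
    (Z : ℝ → ℝ) (hZ : ContinuousOn Z (Icc 0 (2 * π)))
    (K ω : ℝ) (hω : 0 < ω) :
    StrictMonoOn (fun J => normIntegral Z K ω J) (fluxDomain Z K ω) ∧
    ∀ J₁ ∈ fluxDomain Z K ω, ∀ J₂ ∈ fluxDomain Z K ω,
      normIntegral Z K ω J₁ = 1 → normIntegral Z K ω J₂ = 1 → J₁ = J₂ := by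
  have hmono := strictMonoOn_normIntegral hZ K hω
  exact ⟨hmono, fun J₁ h₁ J₂ h₂ e₁ e₂ => hmono.injOn h₁ h₂ (e₁.trans e₂.symm)⟩

/-- Theorem (uniqueness of the stationary flux for the continuum of
impulsively coupled oscillators): `G` is strictly increasing on the admissible
flux domain, hence the normalization equation `G(J) = 1` characterizing the
stationary flux has at most one solution `J*` there. -/
theorem stationary_flux_unique
    (Z : ℝ → ℝ) (hZ : ContinuousOn Z (Icc 0 (2 * π)))
    (K ω : ℝ) (hK : 0 < K) (hω : 0 < ω) :
    StrictMonoOn (fun J => normIntegral Z K ω J) (fluxDomain Z K ω) ∧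
    ∀ J₁ ∈ fluxDomain Z K ω, ∀ J₂ ∈ fluxDomain Z K ω,
      normIntegral Z K ω J₁ = 1 → normIntegral Z K ω J₂ = 1 → J₁ = J₂ :=
  stationary_flux_unique_general Z hZ K ω hω
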